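/- For $a, b > 0$ with $a \ne b$ and $v \in (0,1)$, one has $\sqrt{ab} \le \sqrt{L_v(a,b) L_{1-v}(a,b)} \le \frac{a-b}{\log a - \log b}$, where $L_v(a,b) = \frac{1}{\log a - \log b}\left(\frac{1-v}{v}(a - a^{1-v}b^v) + \frac{v}{1-v}(a^{1-v}b^v - b)\right)$. -/

import Mathlib

/-!
Write `a = b eᵗ` with `t > 0`; the case `a < b` follows by swapping `a` and `b`, which exchanges
`L_v` and `L_{1-v}`. With `G_v = a^{1-v} b^v` one has `L_v = (1-v) L(a, G_v) + v L(G_v, b)`, so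
`L ≥ G` and the weighted AM-GM inequality give `G_v ≤ L_v`; as `G_v G_{1-v} = ab`, this is the
lower bound. For the upper bound, `v²(1-v)² (L² - L_v L_{1-v})` is a positive multiple of
`(1 - 2v) (v² e^{vt} (e^{(1-v)t} - 1)² - (1-v)² e^{(1-v)t} (e^{vt} - 1)²)`, which is nonnegative
because `(eˣ - 1)² / (x² eˣ) = (sinh (x/2) / (x/2))²` increases on `x > 0`, `sinh` being convex
on `[0, ∞)`.
-/

open Real Set

noncomputable def weightedLogMean (v a b : ℝ) : ℝ :=
  1 / (log a - log b) *
    ((1 - v) / v * (a - a ^ (1 - v) * b ^ v) + v / (1 - v) * (a ^ (1 - v) * b ^ v - b))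

lemma weightedLogMean_swap (v a b : ℝ) : weightedLogMean v b a = weightedLogMean (1 - v) a b := by
  rw [weightedLogMean, weightedLogMean, sub_sub_cancel, ← neg_sub (log a),
    one_div_neg_eq_neg_one_div, mul_comm (b ^ (1 - v))]
  ring

lemma weightedLogMean_mul_exp {b : ℝ} (hb : 0 < b) (v t : ℝ) :
    weightedLogMean v (b * exp t) b =
      b / t * ((1 - v) / v * (exp t - exp ((1 - v) * t)) +
        v / (1 - v) * (exp ((1 - v) * t) - 1)) := by
  have hG : (b * exp t) ^ (1 - v) * b ^ v = b * exp ((1 - v) * t) := by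
    rw [mul_rpow hb.le (exp_pos t).le, ← exp_mul, mul_right_comm, ← rpow_add hb, sub_add_cancel,
      rpow_one, mul_comm t]
  rw [weightedLogMean, hG, log_mul hb.ne' (exp_pos t).ne', log_exp, add_sub_cancel_left]
  ring

lemma convexOn_sinh : ConvexOn ℝ (Ici 0) sinh := by
  refine MonotoneOn.convexOn_of_deriv (convex_Ici 0) continuous_sinh.continuousOn
    differentiable_sinh.differentiableOn ?_
  rw [Real.deriv_sinh, interior_Ici]
  exact cosh_strictMonoOn.monotoneOn.mono Ioi_subset_Ici_self

lemma monotoneOn_sinh_div : MonotoneOn (fun x => sinh x / x) (Ioi 0) := by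
  intro x hx y hy hxy
  simpa using convexOn_sinh.secant_mono self_mem_Ici (mem_Ici.2 (le_of_lt hx))
    (mem_Ici.2 (le_of_lt hy)) (ne_of_gt hx) (ne_of_gt hy) hxy

lemma exp_sub_one_eq_mul_sinh (x : ℝ) : exp x - 1 = 2 * exp (x / 2) * sinh (x / 2) := by
  have hsq : exp (x / 2) * exp (x / 2) = exp x := by rw [← exp_add, add_halves]
  have hinv : exp (x / 2) * exp (-(x / 2)) = 1 := by rw [← exp_add, add_neg_cancel, exp_zero]
  rw [sinh_eq]
  linear_combination -hsq + hinv

lemma mul_exp_half_le_exp_sub_one {x : ℝ} (hx : 0 ≤ x) : x * exp (x / 2) ≤ exp x - 1 := by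
  have := self_le_sinh_iff.2 (by positivity : 0 ≤ x / 2)
  rw [exp_sub_one_eq_mul_sinh]
  nlinarith [exp_pos (x / 2)]

/-- The monotonicity of `(exp x - 1)² / (x² exp x) = (sinh (x / 2) / (x / 2))²`,
cross-multiplied. -/
lemma sub_mul_exp_sub_one_sq_cross_nonneg {x y : ℝ} (hx : 0 < x) (hy : 0 < y) :
    0 ≤ (y - x) * (x ^ 2 * exp x * (exp y - 1) ^ 2 - y ^ 2 * exp y * (exp x - 1) ^ 2) := by
  have hmono : 0 ≤ (y / 2 - x / 2) * (x / 2 * sinh (y / 2) - y / 2 * sinh (x / 2)) := by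
    have hx2 : 0 < x / 2 := by positivity
    have hy2 : 0 < y / 2 := by positivity
    rcases le_total x y with hxy | hyx
    · have := monotoneOn_sinh_div hx2 hy2 (by linarith)
      rw [div_le_div_iff₀ hx2 hy2] at this
      exact mul_nonneg (by linarith) (by linarith)
    · have := monotoneOn_sinh_div hy2 hx2 (by linarith)
      rw [div_le_div_iff₀ hy2 hx2] at this
      exact mul_nonneg_of_nonpos_of_nonpos (by linarith) (by linarith)
  have hsum : 0 ≤ x * sinh (y / 2) + y * sinh (x / 2) := by
    have := sinh_pos_iff.2 (half_pos hx)
    have := sinh_pos_iff.2 (half_pos hy)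
    positivity
  have hx2 : exp x = exp (x / 2) ^ 2 := by rw [sq, ← exp_add, add_halves]
  have hy2 : exp y = exp (y / 2) ^ 2 := by rw [sq, ← exp_add, add_halves]
  rw [exp_sub_one_eq_mul_sinh x, exp_sub_one_eq_mul_sinh y, hx2, hy2]
  have hfactor : 0 ≤ 16 * (exp (x / 2) * exp (y / 2)) ^ 2 := by positivity
  refine le_of_le_of_eq (mul_nonneg (mul_nonneg hfactor hmono) hsum) ?_
  ring

lemma mul_exp_le_weighted_exp_sub {v t : ℝ} (hv0 : 0 < v) (hv1 : v < 1) (ht : 0 ≤ t) :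
    t * exp ((1 - v) * t) ≤
      (1 - v) / v * (exp t - exp ((1 - v) * t)) + v / (1 - v) * (exp ((1 - v) * t) - 1) := by
  set X := exp ((1 - v) * t / 2)
  set Y := exp (v * t / 2)
  have hX : exp ((1 - v) * t) = X ^ 2 := by rw [sq, ← exp_add, add_halves]
  have hY : exp (v * t) = Y ^ 2 := by rw [sq, ← exp_add, add_halves]
  have hXY : exp t = X ^ 2 * Y ^ 2 := by rw [← hX, ← hY, ← exp_add]; ring_nf
  have hv1' : 0 < 1 - v := sub_pos.2 hv1
  have hLX : (1 - v) * t * X ≤ X ^ 2 - 1 := hX ▸ mul_exp_half_le_exp_sub_one (by positivity)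
  have hLY : v * t * Y ≤ Y ^ 2 - 1 := hY ▸ mul_exp_half_le_exp_sub_one (by positivity)
  -- weighted AM-GM `(1 - v) Y + v / X ≥ 1`, from `exp u ≥ u + 1`
  have hAMGM : X ≤ (1 - v) * X * Y + v := by
    have hY1 : v * t / 2 + 1 ≤ Y := add_one_le_exp _
    have hX1 : -((1 - v) * t / 2) + 1 ≤ exp (-((1 - v) * t / 2)) := add_one_le_exp _
    have hXinv : X * exp (-((1 - v) * t / 2)) = 1 := by rw [← exp_add, add_neg_cancel, exp_zero]
    have hE : 1 ≤ (1 - v) * Y + v * exp (-((1 - v) * t / 2)) := by nlinarith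
    nlinarith [mul_le_mul_of_nonneg_left hE (exp_pos ((1 - v) * t / 2)).le]
  rw [hX, hXY]
  calc t * X ^ 2 ≤ t * X * ((1 - v) * X * Y + v) := by
        rw [sq, ← mul_assoc]; gcongr
    _ = (1 - v) / v * X ^ 2 * (v * t * Y) + v / (1 - v) * ((1 - v) * t * X) := by
        field_simp
    _ ≤ (1 - v) / v * X ^ 2 * (Y ^ 2 - 1) + v / (1 - v) * (X ^ 2 - 1) := by gcongr
    _ = _ := by ring

lemma weighted_exp_sub_mul_le_sq {v t : ℝ} (hv0 : 0 < v) (hv1 : v < 1) (ht : 0 < t) :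
    ((1 - v) / v * (exp t - exp ((1 - v) * t)) + v / (1 - v) * (exp ((1 - v) * t) - 1)) *
        (v / (1 - v) * (exp t - exp (v * t)) + (1 - v) / v * (exp (v * t) - 1)) ≤
      (exp t - 1) ^ 2 := by
  have hv1' : 0 < 1 - v := sub_pos.2 hv1
  set X := exp ((1 - v) * t)
  set Y := exp (v * t)
  have hXY : exp t = X * Y := by rw [← exp_add]; ring_nf
  have hsign := sub_mul_exp_sub_one_sq_cross_nonneg (mul_pos hv0 ht) (mul_pos hv1' ht)
  have hidentity : v ^ 2 * (1 - v) ^ 2 * ((X * Y - 1) ^ 2 -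
      ((1 - v) / v * (X * Y - X) + v / (1 - v) * (X - 1)) *
        (v / (1 - v) * (X * Y - Y) + (1 - v) / v * (Y - 1))) =
      (1 - 2 * v) * (v ^ 2 * Y * (X - 1) ^ 2 - (1 - v) ^ 2 * X * (Y - 1) ^ 2) := by
    field_simp
    ring
  rw [hXY, ← sub_nonneg]
  refine nonneg_of_mul_nonneg_right (a := t ^ 3 * (v ^ 2 * (1 - v) ^ 2)) ?_ (by positivity)
  rw [mul_assoc, hidentity]
  refine le_of_le_of_eq hsign ?_
  ring

lemma sqrt_mul_le_sqrt_weightedLogMean_mul_of_lt {a b v : ℝ} (ha : 0 < a) (hb : 0 < b)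
    (hba : b < a) (hv0 : 0 < v) (hv1 : v < 1) :
    √(a * b) ≤ √(weightedLogMean v a b * weightedLogMean (1 - v) a b) ∧
      √(weightedLogMean v a b * weightedLogMean (1 - v) a b) ≤ (a - b) / (log a - log b) := by
  obtain ⟨t, ht, rfl⟩ : ∃ t, 0 < t ∧ a = b * exp t :=
    ⟨log (a / b), log_pos ((one_lt_div hb).2 hba),
      by rw [exp_log (div_pos ha hb), mul_div_cancel₀ _ hb.ne']⟩
  have hv1' : 0 < 1 - v := sub_pos.2 hv1
  rw [weightedLogMean_mul_exp hb, weightedLogMean_mul_exp hb, sub_sub_cancel,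
    log_mul hb.ne' (exp_pos t).ne', log_exp, add_sub_cancel_left]
  set P := (1 - v) / v * (exp t - exp ((1 - v) * t)) + v / (1 - v) * (exp ((1 - v) * t) - 1)
  set Q := v / (1 - v) * (exp t - exp (v * t)) + (1 - v) / v * (exp (v * t) - 1)
  have hP : t * exp ((1 - v) * t) ≤ P := mul_exp_le_weighted_exp_sub hv0 hv1 ht.le
  have hQ : t * exp (v * t) ≤ Q := by
    simpa only [sub_sub_cancel] using mul_exp_le_weighted_exp_sub hv1' (sub_lt_self 1 hv0) ht.le
  have hsplit : exp ((1 - v) * t) * exp (v * t) = exp t := by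
    rw [← exp_add, sub_mul, sub_add_cancel, one_mul]
  constructor
  · apply sqrt_le_sqrt
    calc b * exp t * b = (b / t) ^ 2 * ((t * exp ((1 - v) * t)) * (t * exp (v * t))) := by
          rw [← hsplit]; field_simp
      _ ≤ (b / t) ^ 2 * (P * Q) := by
          gcongr
          exact (by positivity : 0 ≤ t * exp ((1 - v) * t)).trans hP
      _ = b / t * P * (b / t * Q) := by ring
  · rw [sqrt_le_left (by positivity)]
    calc b / t * P * (b / t * Q) = (b / t) ^ 2 * (P * Q) := by ring
      _ ≤ (b / t) ^ 2 * (exp t - 1) ^ 2 := by gcongr; exact weighted_exp_sub_mul_le_sq hv0 hv1 ht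
      _ = ((b * exp t - b) / t) ^ 2 := by ring

theorem stmt15 (a b v : ℝ) (ha : 0 < a) (hb : 0 < b) (hab : a ≠ b)
    (hv0 : 0 < v) (hv1 : v < 1) :
    Real.sqrt (a * b) ≤
      Real.sqrt (((1 / (Real.log a - Real.log b)) *
          ((1 - v) / v * (a - a ^ (1 - v) * b ^ v) + v / (1 - v) * (a ^ (1 - v) * b ^ v - b))) *
        ((1 / (Real.log a - Real.log b)) *
          (v / (1 - v) * (a - a ^ v * b ^ (1 - v)) + (1 - v) / v * (a ^ v * b ^ (1 - v) - b)))) ∧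
    Real.sqrt (((1 / (Real.log a - Real.log b)) *
          ((1 - v) / v * (a - a ^ (1 - v) * b ^ v) + v / (1 - v) * (a ^ (1 - v) * b ^ v - b))) *
        ((1 / (Real.log a - Real.log b)) *
          (v / (1 - v) * (a - a ^ v * b ^ (1 - v)) + (1 - v) / v * (a ^ v * b ^ (1 - v) - b))))
      ≤ (a - b) / (Real.log a - Real.log b) := by
  have key : √(a * b) ≤ √(weightedLogMean v a b * weightedLogMean (1 - v) a b) ∧
      √(weightedLogMean v a b * weightedLogMean (1 - v) a b) ≤ (a - b) / (log a - log b) := by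
    rcases hab.lt_or_gt with hlt | hlt
    · have := sqrt_mul_le_sqrt_weightedLogMean_mul_of_lt hb ha hlt hv0 hv1
      rwa [mul_comm b a, weightedLogMean_swap v a b, weightedLogMean_swap (1 - v) a b,
        sub_sub_cancel,
        mul_comm (weightedLogMean (1 - v) a b),        ← neg_div_neg_eq, neg_sub, neg_sub] at this
    · exact sqrt_mul_le_sqrt_weightedLogMean_mul_of_lt ha hb hlt hv0 hv1
  simpa only [weightedLogMean, sub_sub_cancel] using key
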